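/- Let μ be a finitely supported symmetric complex function on a group Γ with Σ_x μ(x) = 1 arising from μ_s(x) = ρ_s(e,x)/ρ_s(e) with all ρ_s(e,x) of admittance form at parameter s ∈ ℂ, Re s > 0. Then the total variation satisfies Σ_x |μ_s(x)| ≤ |s| / Re s. -/

import Mathlib

/-!
Write `c = Re s / |s|`. The set of `z` with `c |z| ≤ Re z` is a convex cone closed under
inversion, and it contains `s`, `s⁻¹` and every nonnegative real (as `c ≤ 1`). Hence it contains
`q / s = L s + R + D s⁻¹` and its inverse `ρ = s / q`. Summing `c |ρ_a| ≤ Re ρ_a` gives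
`c Σ |ρ_a| ≤ Re Σ ρ_a ≤ |Σ ρ_a|`, i.e. `Σ |μ_a| ≤ 1 / c`.
-/

open Finset

def sector (c : ℝ) : Set ℂ := {z | c * ‖z‖ ≤ z.re}

namespace sector

variable {c : ℝ} {z w : ℂ}

theorem mem_iff : z ∈ sector c ↔ c * ‖z‖ ≤ z.re := Iff.rfl

theorem add_mem (hc : 0 ≤ c) (hz : z ∈ sector c) (hw : w ∈ sector c) : z + w ∈ sector c :=
  calc c * ‖z + w‖ ≤ c * ‖z‖ + c * ‖w‖ := by
        rw [← mul_add]; exact mul_le_mul_of_nonneg_left (norm_add_le z w) hc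
    _ ≤ (z + w).re := by rw [Complex.add_re]; exact add_le_add hz hw

theorem ofReal_mul_mem {r : ℝ} (hr : 0 ≤ r) (hz : z ∈ sector c) : (r : ℂ) * z ∈ sector c := by
  rw [mem_iff, norm_mul, Complex.norm_real, Real.norm_of_nonneg hr, Complex.re_ofReal_mul,
    mul_left_comm]
  exact mul_le_mul_of_nonneg_left hz hr

theorem ofReal_mem {r : ℝ} (hr : 0 ≤ r) (hc : c ≤ 1) : (r : ℂ) ∈ sector c := by
  rw [mem_iff, Complex.norm_real, Real.norm_of_nonneg hr, Complex.ofReal_re]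
  exact mul_le_of_le_one_left hr hc

theorem inv_mem (hz : z ∈ sector c) : z⁻¹ ∈ sector c := by
  rw [mem_iff, norm_inv, Complex.inv_re, Complex.normSq_eq_norm_sq, ← div_eq_mul_inv]
  rcases (norm_nonneg z).eq_or_lt with h | h
  · simp [← h]
  · rw [div_le_div_iff₀ h (by positivity)]
    nlinarith [mem_iff.mp hz]

theorem self_mem (s : ℂ) : s ∈ sector (s.re / ‖s‖) := by
  rw [mem_iff, div_mul_cancel_of_imp]
  simp +contextual

end sector

theorem div_quadratic_mem_sector {s : ℂ} (hs : 0 < s.re) {L R D : ℝ} (hL : 0 ≤ L) (hR : 0 ≤ R)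
    (hD : 0 ≤ D) : s / ((L : ℂ) * s ^ 2 + (R : ℂ) * s + (D : ℂ)) ∈ sector (s.re / ‖s‖) := by
  have hs0 : s ≠ 0 := fun h => by simp [h] at hs
  have hc : 0 ≤ s.re / ‖s‖ := div_nonneg hs.le (norm_nonneg s)
  have hq : ((L : ℂ) * s ^ 2 + (R : ℂ) * s + (D : ℂ)) / s =
      (L : ℂ) * s + (R : ℂ) + (D : ℂ) * s⁻¹ := by
    field_simp
  rw [← inv_div _ s, hq]
  refine sector.inv_mem (sector.add_mem hc (sector.add_mem hc ?_ ?_) ?_)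
  · exact sector.ofReal_mul_mem hL (sector.self_mem s)
  · exact sector.ofReal_mem hR ((le_abs_self _).trans (Complex.abs_re_div_norm_le_one s))
  · exact sector.ofReal_mul_mem hD (sector.inv_mem (sector.self_mem s))

theorem sum_norm_div_sum_le_inv {ι : Type*} (t : Finset ι) (z : ι → ℂ) {c : ℝ} (hc : 0 < c)
    (hz : ∀ i ∈ t, z i ∈ sector c) : ∑ i ∈ t, ‖z i / ∑ j ∈ t, z j‖ ≤ c⁻¹ := by
  have hsum : c * ∑ i ∈ t, ‖z i‖ ≤ ‖∑ j ∈ t, z j‖ :=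
    calc c * ∑ i ∈ t, ‖z i‖ ≤ ∑ i ∈ t, (z i).re := by
          rw [mul_sum]; exact sum_le_sum hz
      _ = (∑ j ∈ t, z j).re := (Complex.re_sum t z).symm
      _ ≤ ‖∑ j ∈ t, z j‖ := Complex.re_le_norm _
  simp_rw [norm_div, ← sum_div]
  rcases (norm_nonneg (∑ j ∈ t, z j)).eq_or_lt with h | h
  · simp [← h, hc.le] -- the sum vanishes and `x / 0 = 0`
  · rw [div_le_iff₀ h, inv_mul_eq_div, le_div_iff₀ hc, mul_comm]
    exact hsum

theorem total_variation_le_general (s : ℂ) (hs : 0 < s.re) {ι : Type*} [Fintype ι]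
    (L R D : ι → ℝ) (hL : ∀ a, 0 ≤ L a) (hR : ∀ a, 0 ≤ R a) (hD : ∀ a, 0 ≤ D a) :
    ∑ a, ‖(s / ((L a : ℂ) * s ^ 2 + (R a : ℂ) * s + (D a : ℂ))) /
        ∑ b, s / ((L b : ℂ) * s ^ 2 + (R b : ℂ) * s + (D b : ℂ))‖ ≤
      ‖s‖ / s.re := by
  have hc : 0 < s.re / ‖s‖ := div_pos hs (hs.trans_le (Complex.re_le_norm s))
  rw [← inv_div]
  exact sum_norm_div_sum_le_inv univ _ hc fun a _ =>
    div_quadratic_mem_sector hs (hL a) (hR a) (hD a)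

/-- for μ_s(a) = ρ_s(e,a)/Σ_b ρ_s(e,b) over a finite (symmetric generating)
set, the total variation satisfies Σ_a |μ_s(a)| ≤ |s|/Re s. -/
theorem total_variation_le (s : ℂ) (hs : 0 < s.re) {ι : Type*} [Fintype ι]
    (L R D : ι → ℝ) (hL : ∀ a, 0 ≤ L a) (hR : ∀ a, 0 ≤ R a) (hD : ∀ a, 0 ≤ D a)
    (hsum : ∀ a, 0 < L a + R a + D a) :
    ∑ a, ‖(s / ((L a : ℂ) * s ^ 2 + (R a : ℂ) * s + (D a : ℂ))) /
        ∑ b, s / ((L b : ℂ) * s ^ 2 + (R b : ℂ) * s + (D b : ℂ))‖ ≤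
      ‖s‖ / s.re :=
  total_variation_le_general s hs L R D hL hR hD
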